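/- arXiv:2001.10955 — 6 statements merged into one kernel-verified Lean document; each statement's English description precedes it below -/
import Mathlib

section
/- Let T, p, r be positive integers, X a T×p real matrix, F a T×r real matrix satisfying FᵀF = T·I_r, Q a symmetric positive semidefinite p×p real matrix, and α ≥ 0. Then the matrix D = I_p + αQ is invertible, and the function f(B) = (pT)⁻¹‖X − FBᵀ‖_F² + (α/p)·tr(BᵀQB) over p×r real matrices B attains its minimum uniquely at B* = T⁻¹(I_p + αQ)⁻¹XᵀF; that is, f(B) ≥ f(B*) for every p×r matrix B, with equality if and only if B = B*. -/
open Matrix BigOperators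

/-- The penalized least-squares objective
`f(B) = (pT)⁻¹‖X − FBᵀ‖_F² + (α/p)·tr(BᵀQB)`. -/
noncomputable def penObj (T p r : ℕ) (X : Matrix (Fin T) (Fin p) ℝ)
    (F : Matrix (Fin T) (Fin r) ℝ) (Q : Matrix (Fin p) (Fin p) ℝ) (α : ℝ)
    (B : Matrix (Fin p) (Fin r) ℝ) : ℝ :=
  ((p : ℝ) * T)⁻¹ * Matrix.trace ((X - F * Bᵀ)ᵀ * (X - F * Bᵀ))
    + (α / p) * Matrix.trace (Bᵀ * Q * B)

/-- The closed-form minimizer `B* = T⁻¹(I_p + αQ)⁻¹XᵀF`. -/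
noncomputable def penMinimizer (T p r : ℕ) (X : Matrix (Fin T) (Fin p) ℝ)
    (F : Matrix (Fin T) (Fin r) ℝ) (Q : Matrix (Fin p) (Fin p) ℝ) (α : ℝ) :
    Matrix (Fin p) (Fin r) ℝ :=
  (T : ℝ)⁻¹ • (((1 : Matrix (Fin p) (Fin p) ℝ) + α • Q)⁻¹ * Xᵀ * F)

/-!
With `FᵀF = T·I`, the objective is a constant plus `p⁻¹ (tr(BᵀDB) − 2 tr(BᵀC))`, where
`D = I + αQ` and `C = T⁻¹XᵀF`. The minimizer solves the normal equation `D B* = C`, and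
completing the square gives `f(B) − f(B*) = p⁻¹ tr((B − B*)ᵀ D (B − B*))`. Since `D` is
positive definite, this is nonnegative and vanishes only at `B = B*`.
-/

namespace Matrix

variable {m n k : Type*} [Fintype m] [Fintype n] [Fintype k]

open scoped ComplexOrder in
theorem PosDef.trace_conjTranspose_mul_mul_same_eq_zero_iff {𝕜 : Type*} [RCLike 𝕜]
    {D : Matrix n n 𝕜} (hD : D.PosDef) (E : Matrix n m 𝕜) :
    (Eᴴ * D * E).trace = 0 ↔ E = 0 := by
  refine ⟨fun h ↦ ?_, fun h ↦ by simp [h]⟩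
  have hzero : Eᴴ * D * E = 0 :=
    (hD.posSemidef.conjTranspose_mul_mul_same E).trace_eq_zero_iff.mp h
  refine ext_iff_mulVec.mpr fun x ↦ ?_
  by_contra hx
  rw [zero_mulVec] at hx
  have hpos : 0 < star x ⬝ᵥ ((Eᴴ * D * E) *ᵥ x) := by
    simpa only [star_mulVec, dotProduct_mulVec, vecMul_vecMul] using hD.dotProduct_mulVec_pos hx
  simp [hzero] at hpos

variable {R : Type*} [CommRing R]

theorem trace_transpose_sub_mul_mul_sub {D : Matrix n n R} (hD : D.IsSymm) (B B₀ : Matrix n m R) :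
    ((B - B₀)ᵀ * D * (B - B₀)).trace
      = (Bᵀ * D * B).trace - 2 * (Bᵀ * D * B₀).trace + (B₀ᵀ * D * B₀).trace := by
  have hsymm : (B₀ᵀ * D * B).trace = (Bᵀ * D * B₀).trace := by
    rw [← trace_transpose]
    simp [transpose_mul, hD.eq, Matrix.mul_assoc]
  simp only [transpose_sub, Matrix.sub_mul, Matrix.mul_sub, trace_sub, hsymm]
  ring

theorem trace_transpose_sub_mul_transpose_mul_self [DecidableEq n] {c : R} {F : Matrix k n R}
    (hF : Fᵀ * F = c • 1) (X : Matrix k m R) (B : Matrix m n R) :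
    ((X - F * Bᵀ)ᵀ * (X - F * Bᵀ)).trace
      = (Xᵀ * X).trace - 2 * (Bᵀ * (Xᵀ * F)).trace + c * (Bᵀ * B).trace := by
  have hcross : (Xᵀ * (F * Bᵀ)).trace = (Bᵀ * (Xᵀ * F)).trace := by
    rw [← Matrix.mul_assoc, trace_mul_comm]
  have hcross' : (B * Fᵀ * X).trace = (Bᵀ * (Xᵀ * F)).trace := by
    rw [← trace_transpose]; simpa [transpose_mul, Matrix.mul_assoc] using hcross
  have hsq : (B * Fᵀ * (F * Bᵀ)).trace = c * (Bᵀ * B).trace := by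
    rw [Matrix.mul_assoc, ← Matrix.mul_assoc Fᵀ, hF, smul_mul, Matrix.one_mul, Matrix.mul_smul,
      trace_smul, trace_mul_comm, smul_eq_mul]
  simp only [transpose_sub, transpose_mul, transpose_transpose, Matrix.sub_mul, Matrix.mul_sub,
    trace_sub, hcross, hcross', hsq]
  ring

end Matrix

section PenalizedLeastSquares

variable {T p r : ℕ} {X : Matrix (Fin T) (Fin p) ℝ} {F : Matrix (Fin T) (Fin r) ℝ}
  {Q : Matrix (Fin p) (Fin p) ℝ} {α : ℝ}

theorem penObj_eq (hT : T ≠ 0) (hF : Fᵀ * F = (T : ℝ) • (1 : Matrix (Fin r) (Fin r) ℝ))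
    (B : Matrix (Fin p) (Fin r) ℝ) :
    penObj T p r X F Q α B = ((p : ℝ) * T)⁻¹ * (Xᵀ * X).trace
      + (p : ℝ)⁻¹ * ((Bᵀ * (1 + α • Q) * B).trace
        - 2 * (Bᵀ * ((T : ℝ)⁻¹ • (Xᵀ * F))).trace) := by
  have hquad :
      (Bᵀ * (1 + α • Q) * B).trace = (Bᵀ * B).trace + α * (Bᵀ * Q * B).trace := by
    rw [Matrix.mul_add, Matrix.add_mul, Matrix.mul_one, Matrix.mul_smul, Matrix.smul_mul,
      trace_add, trace_smul, smul_eq_mul]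
  rw [penObj, Matrix.trace_transpose_sub_mul_transpose_mul_self hF, hquad, Matrix.mul_smul,
    trace_smul, smul_eq_mul]
  have hT' : (T : ℝ) ≠ 0 := by exact_mod_cast hT
  field_simp
  ring

theorem penObj_sub_penObj_penMinimizer (hT : T ≠ 0)
    (hF : Fᵀ * F = (T : ℝ) • (1 : Matrix (Fin r) (Fin r) ℝ)) (hQ : Q.IsSymm)
    (hD : IsUnit ((1 : Matrix (Fin p) (Fin p) ℝ) + α • Q)) (B : Matrix (Fin p) (Fin r) ℝ) :
    penObj T p r X F Q α B - penObj T p r X F Q α (penMinimizer T p r X F Q α)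
      = (p : ℝ)⁻¹ * ((B - penMinimizer T p r X F Q α)ᵀ * (1 + α • Q)
          * (B - penMinimizer T p r X F Q α)).trace := by
  have hnormal : (1 + α • Q) * penMinimizer T p r X F Q α = (T : ℝ)⁻¹ • (Xᵀ * F) := by
    rw [penMinimizer, Matrix.mul_smul, Matrix.mul_assoc, Matrix.mul_nonsing_inv_cancel_left _ _
      ((isUnit_iff_isUnit_det _).mp hD)]
  rw [penObj_eq hT hF, penObj_eq hT hF, ← hnormal,
    Matrix.trace_transpose_sub_mul_mul_sub (isSymm_one.add (hQ.smul α)), Matrix.mul_assoc,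
    Matrix.mul_assoc, Matrix.mul_assoc]
  ring

end PenalizedLeastSquares

theorem penalized_objective_minimizer_general (T p r : ℕ) (hT : 0 < T) (hp : 0 < p)
    (X : Matrix (Fin T) (Fin p) ℝ) (F : Matrix (Fin T) (Fin r) ℝ)
    (hF : Fᵀ * F = (T : ℝ) • (1 : Matrix (Fin r) (Fin r) ℝ))
    (Q : Matrix (Fin p) (Fin p) ℝ) (hQ : Q.PosSemidef)
    (α : ℝ) (hα : 0 ≤ α) :
    IsUnit ((1 : Matrix (Fin p) (Fin p) ℝ) + α • Q) ∧
      ∀ B : Matrix (Fin p) (Fin r) ℝ,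
        penObj T p r X F Q α B ≥ penObj T p r X F Q α (penMinimizer T p r X F Q α) ∧
        (penObj T p r X F Q α B = penObj T p r X F Q α (penMinimizer T p r X F Q α)
          ↔ B = penMinimizer T p r X F Q α) := by
  have hD : ((1 : Matrix (Fin p) (Fin p) ℝ) + α • Q).PosDef :=
    PosDef.one.add_posSemidef (hQ.smul hα)
  refine ⟨hD.isUnit, fun B ↦ ?_⟩
  set E := B - penMinimizer T p r X F Q α
  have hdiff := penObj_sub_penObj_penMinimizer (X := X) hT.ne' hF
    (isHermitian_iff_isSymm.mp hQ.isHermitian) hD.isUnit B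
  have hnonneg : 0 ≤ (Eᵀ * (1 + α • Q) * E).trace := by
    simpa using (hD.posSemidef.conjTranspose_mul_mul_same E).trace_nonneg
  have hzero := hD.trace_conjTranspose_mul_mul_same_eq_zero_iff E
  rw [conjTranspose_eq_transpose_of_trivial] at hzero
  have hp' : (0 : ℝ) < (p : ℝ)⁻¹ := by positivity
  constructor
  · linarith [mul_nonneg hp'.le hnonneg]
  · rw [← sub_eq_zero, hdiff, mul_eq_zero, or_iff_right hp'.ne', hzero, sub_eq_zero]

/-- If `FᵀF = T·I_r`, `Q` is symmetric positive semidefinite and `α ≥ 0`, then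
`I_p + αQ` is invertible and the penalized objective is uniquely minimized at
`B* = T⁻¹(I_p + αQ)⁻¹XᵀF`. -/
theorem penalized_objective_minimizer (T p r : ℕ) (hT : 0 < T) (hp : 0 < p) (hr : 0 < r)
    (X : Matrix (Fin T) (Fin p) ℝ) (F : Matrix (Fin T) (Fin r) ℝ)
    (hF : Fᵀ * F = (T : ℝ) • (1 : Matrix (Fin r) (Fin r) ℝ))
    (Q : Matrix (Fin p) (Fin p) ℝ) (hQ : Q.PosSemidef)
    (α : ℝ) (hα : 0 ≤ α) :
    IsUnit ((1 : Matrix (Fin p) (Fin p) ℝ) + α • Q) ∧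
      ∀ B : Matrix (Fin p) (Fin r) ℝ,
        penObj T p r X F Q α B ≥ penObj T p r X F Q α (penMinimizer T p r X F Q α) ∧
        (penObj T p r X F Q α B = penObj T p r X F Q α (penMinimizer T p r X F Q α)
          ↔ B = penMinimizer T p r X F Q α) :=
  penalized_objective_minimizer_general T p r hT hp X F hF Q hQ α hα
end

section
/- Let T, p, r be positive integers, X a T×p real matrix, F a T×r real matrix satisfying FᵀF = T·I_r, Q a symmetric positive semidefinite p×p real matrix, and α ≥ 0. Then, with B* = T⁻¹(I_p + αQ)⁻¹XᵀF, the value of the penalized objective at the minimizer is (pT)⁻¹‖X − F(B*)ᵀ‖_F² + (α/p)·tr((B*)ᵀQB*) = (pT)⁻¹tr(XᵀX) − (pT²)⁻¹tr(FᵀX(I_p + αQ)⁻¹XᵀF). -/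
open Matrix BigOperators

namespace Matrix

variable {m n k R : Type*} [Fintype m] [Fintype n] [Fintype k]

theorem trace_gram_sub_mul_transpose [DecidableEq k] [CommRing R]
    (X : Matrix m n R) (F : Matrix m k R) (B : Matrix n k R) {c : R}
    (hF : Fᵀ * F = c • 1) :
    trace ((X - F * Bᵀ)ᵀ * (X - F * Bᵀ))
      = trace (Xᵀ * X) - 2 * trace (Bᵀ * (Xᵀ * F)) + c * trace (Bᵀ * B) := by
  have hcross : trace (Xᵀ * (F * Bᵀ)) = trace (Bᵀ * (Xᵀ * F)) := by
    rw [← Matrix.mul_assoc, trace_mul_comm]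
  have hcross_transpose : trace ((F * Bᵀ)ᵀ * X) = trace (Bᵀ * (Xᵀ * F)) := by
    rw [← trace_transpose, transpose_mul, transpose_transpose, hcross]
  have hquad : trace ((F * Bᵀ)ᵀ * (F * Bᵀ)) = c * trace (Bᵀ * B) := by
    rw [transpose_mul, transpose_transpose, Matrix.mul_assoc, ← Matrix.mul_assoc Fᵀ, hF,
      Matrix.smul_mul, Matrix.one_mul, Matrix.mul_smul, trace_smul, smul_eq_mul,
      trace_mul_comm]
  rw [transpose_sub, Matrix.sub_mul, Matrix.mul_sub, Matrix.mul_sub, trace_sub, trace_sub,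
    trace_sub, hcross, hcross_transpose, hquad]
  ring

/-- Also true for singular `M`, where `M⁻¹ = 0`. -/
theorem transpose_nonsing_inv_mul_mul_nonsing_inv [DecidableEq n] [CommRing R]
    (M : Matrix n n R) : M⁻¹ᵀ * M * M⁻¹ = M⁻¹ᵀ := by
  by_cases h : IsUnit M.det
  · rw [Matrix.mul_assoc, mul_nonsing_inv M h, Matrix.mul_one]
  · simp [nonsing_inv_apply_not_isUnit M h]

theorem trace_ridge_objective_at_minimizer [DecidableEq n] [DecidableEq k] [Field R]
    (X : Matrix m n R) (F : Matrix m k R) (Q : Matrix n n R) {c : R} (α : R) (hc : c ≠ 0)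
    (hF : Fᵀ * F = c • 1) {B : Matrix n k R} (hB : B = c⁻¹ • ((1 + α • Q)⁻¹ * Xᵀ * F)) :
    trace ((X - F * Bᵀ)ᵀ * (X - F * Bᵀ)) + c * α * trace (Bᵀ * Q * B)
      = trace (Xᵀ * X) - c⁻¹ * trace (Fᵀ * X * (1 + α • Q)⁻¹ * Xᵀ * F) := by
  set M := 1 + α • Q
  set G := Xᵀ * F
  set s := trace (Gᵀ * M⁻¹ * G)
  have hlin : trace (Bᵀ * G) = c⁻¹ * s := by
    rw [← trace_transpose]
    simp [hB, s, G, transpose_mul, trace_smul, Matrix.mul_assoc]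
  have hquad : trace (Bᵀ * M * B) = c⁻¹ ^ 2 * s := by
    have : Bᵀ * M * B = c⁻¹ ^ 2 • (Gᵀ * (M⁻¹ᵀ * M * M⁻¹) * G) := by
      simp only [hB, G, transpose_smul, transpose_mul, transpose_transpose, Matrix.smul_mul,
        Matrix.mul_smul, smul_smul, Matrix.mul_assoc, sq]
    rw [this, transpose_nonsing_inv_mul_mul_nonsing_inv, trace_smul, smul_eq_mul,
      ← trace_transpose]
    simp [s, transpose_mul, Matrix.mul_assoc]
  have hpen : trace (Bᵀ * B) + α * trace (Bᵀ * Q * B) = trace (Bᵀ * M * B) := by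
    simp [M, Matrix.mul_add, Matrix.add_mul, trace_add, trace_smul]
  have hs : trace (Fᵀ * X * M⁻¹ * Xᵀ * F) = s := by
    simp [s, G, Matrix.mul_assoc]
  have hc' : c * c⁻¹ ^ 2 = c⁻¹ := by field_simp
  rw [trace_gram_sub_mul_transpose X F B hF, hs, hlin]
  linear_combination c * hpen + c * hquad + s * hc'

end Matrix

theorem penalized_objective_value_at_minimizer_general (T p r : ℕ) (hT : 0 < T)
    (X : Matrix (Fin T) (Fin p) ℝ) (F : Matrix (Fin T) (Fin r) ℝ)
    (hF : Fᵀ * F = (T : ℝ) • (1 : Matrix (Fin r) (Fin r) ℝ))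
    (Q : Matrix (Fin p) (Fin p) ℝ)
    (α : ℝ) :
    ((p : ℝ) * T)⁻¹ * Matrix.trace
        ((X - F * (penMinimizer T p r X F Q α)ᵀ)ᵀ * (X - F * (penMinimizer T p r X F Q α)ᵀ))
      + (α / p) * Matrix.trace
          ((penMinimizer T p r X F Q α)ᵀ * Q * penMinimizer T p r X F Q α)
    = ((p : ℝ) * T)⁻¹ * Matrix.trace (Xᵀ * X)
      - ((p : ℝ) * (T : ℝ) ^ 2)⁻¹ * Matrix.trace
          (Fᵀ * X * ((1 : Matrix (Fin p) (Fin p) ℝ) + α • Q)⁻¹ * Xᵀ * F) := by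
  have hT' : (T : ℝ) ≠ 0 := by positivity
  have key := trace_ridge_objective_at_minimizer X F Q α hT' hF
    (B := penMinimizer T p r X F Q α) rfl
  have hscale : α / p = ((p : ℝ) * T)⁻¹ * (T * α) := by field_simp
  rw [hscale, mul_assoc, ← mul_add, key]
  ring

/-- Value of the penalized objective at the minimizer `B* = T⁻¹(I_p + αQ)⁻¹XᵀF`:
`(pT)⁻¹‖X − F(B*)ᵀ‖_F² + (α/p)·tr((B*)ᵀQB*)
  = (pT)⁻¹tr(XᵀX) − (pT²)⁻¹tr(FᵀX(I_p + αQ)⁻¹XᵀF)`. -/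
theorem penalized_objective_value_at_minimizer (T p r : ℕ) (hT : 0 < T) (hp : 0 < p)
    (hr : 0 < r)
    (X : Matrix (Fin T) (Fin p) ℝ) (F : Matrix (Fin T) (Fin r) ℝ)
    (hF : Fᵀ * F = (T : ℝ) • (1 : Matrix (Fin r) (Fin r) ℝ))
    (Q : Matrix (Fin p) (Fin p) ℝ) (hQ : Q.PosSemidef)
    (α : ℝ) (hα : 0 ≤ α) :
    ((p : ℝ) * T)⁻¹ * Matrix.trace
        ((X - F * (penMinimizer T p r X F Q α)ᵀ)ᵀ * (X - F * (penMinimizer T p r X F Q α)ᵀ))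
      + (α / p) * Matrix.trace
          ((penMinimizer T p r X F Q α)ᵀ * Q * penMinimizer T p r X F Q α)
    = ((p : ℝ) * T)⁻¹ * Matrix.trace (Xᵀ * X)
      - ((p : ℝ) * (T : ℝ) ^ 2)⁻¹ * Matrix.trace
          (Fᵀ * X * ((1 : Matrix (Fin p) (Fin p) ℝ) + α • Q)⁻¹ * Xᵀ * F) :=
  penalized_objective_value_at_minimizer_general T p r hT X F hF Q α
end

section
/- Let p, T be positive integers, let τ₁,…,τ_p ≥ 0 and b̃₁,…,b̃_p ∈ ℝ^r with max_j τ_j‖b̃_j‖² > 0, set β = (T·max_j{τ_j‖b̃_j‖²})⁻¹, and define h(α) = p⁻¹ Σ_{j=1}^p α²τ_j²‖b̃_j‖²/(1+ατ_j)² + (pT)⁻¹ Σ_{j=1}^p 1/(1+ατ_j)². Then h is monotonically nonincreasing on [0, β]: for all 0 ≤ α₁ ≤ α₂ ≤ β, h(α₂) ≤ h(α₁). -/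
/-! In the variable `x = ατ_j`, the `j`-th summand of `h` is `(c x² + a)/(1 + x)²` with
`c = ‖b̃_j‖²` and `a = 1/T`, whose derivative has the sign of `c x - a`. On `[0, β]` every
`c x = α τ_j ‖b̃_j‖²` is at most `β · max_j τ_j‖b̃_j‖² = 1/T`, so every summand is nonincreasing. -/

theorem antitoneOn_sq_add_div_one_add_sq (c a : ℝ) :
    AntitoneOn (fun x : ℝ => (c * x ^ 2 + a) / (1 + x) ^ 2) {x | 0 ≤ x ∧ c * x ≤ a} := by
  rintro x ⟨hx, hxa⟩ y ⟨hy, hya⟩ hxy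
  dsimp only
  rw [div_le_div_iff₀ (by positivity) (by positivity)]
  have key : (c * x ^ 2 + a) * (1 + y) ^ 2 - (c * y ^ 2 + a) * (1 + x) ^ 2
      = (y - x) * ((a - c * x) + (a - c * y) + x * (a - c * y) + y * (a - c * x)) := by
    ring
  rw [← sub_nonneg, key]
  have hxa' := sub_nonneg.2 hxa
  have hya' := sub_nonneg.2 hya
  exact mul_nonneg (sub_nonneg.2 hxy) (by positivity)

theorem error_functional_nonincreasing_general (p T r : ℕ)
    (τ : Fin p → ℝ) (hτ : ∀ j, 0 ≤ τ j) (b : Fin p → Fin r → ℝ)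
    (z : ℝ) (hz : IsGreatest (Set.range fun j => τ j * ∑ k, (b j k) ^ 2) z)
    (hzpos : 0 < z)
    (h : ℝ → ℝ)
    (hh : ∀ α : ℝ, h α =
      (p : ℝ)⁻¹ * ∑ j, α ^ 2 * (τ j) ^ 2 * (∑ k, (b j k) ^ 2) / (1 + α * τ j) ^ 2
        + ((p : ℝ) * T)⁻¹ * ∑ j, 1 / (1 + α * τ j) ^ 2) :
    ∀ α₁ α₂ : ℝ, 0 ≤ α₁ → α₁ ≤ α₂ → α₂ ≤ ((T : ℝ) * z)⁻¹ → h α₂ ≤ h α₁ := by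
  intro u v hu huv hv
  have hform : ∀ α, h α = (p : ℝ)⁻¹ *
      ∑ j, ((∑ k, (b j k) ^ 2) * (α * τ j) ^ 2 + (T : ℝ)⁻¹) / (1 + α * τ j) ^ 2 := by
    intro α
    rw [hh, mul_inv, mul_assoc, ← mul_add, Finset.mul_sum, ← Finset.sum_add_distrib]
    exact congrArg _ (Finset.sum_congr rfl fun j _ => by ring)
  have hmem : ∀ j α, 0 ≤ α → α ≤ v →
      0 ≤ α * τ j ∧ (∑ k, (b j k) ^ 2) * (α * τ j) ≤ (T : ℝ)⁻¹ := by
    intro j α hα hαv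
    refine ⟨mul_nonneg hα (hτ j), ?_⟩
    calc (∑ k, (b j k) ^ 2) * (α * τ j) = α * (τ j * ∑ k, (b j k) ^ 2) := by ring
      _ ≤ α * z := mul_le_mul_of_nonneg_left (hz.2 ⟨j, rfl⟩) hα
      _ ≤ ((T : ℝ) * z)⁻¹ * z := mul_le_mul_of_nonneg_right (hαv.trans hv) hzpos.le
      _ = (T : ℝ)⁻¹ := by rw [mul_inv, inv_mul_cancel_right₀ hzpos.ne']
  rw [hform, hform]
  refine mul_le_mul_of_nonneg_left (Finset.sum_le_sum fun j _ => ?_) (by positivity)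
  exact antitoneOn_sq_add_div_one_add_sq _ _ (hmem j u hu huv) (hmem j v (hu.trans huv) le_rfl)
    (mul_le_mul_of_nonneg_right huv (hτ j))

/-- The asymptotic error functional
`h(α) = p⁻¹ Σ_j α²τ_j²‖b̃_j‖²/(1+ατ_j)² + (pT)⁻¹ Σ_j 1/(1+ατ_j)²`
is monotonically nonincreasing on `[0, β]`, where `β = (T · max_j τ_j‖b̃_j‖²)⁻¹`
and `z = max_j τ_j‖b̃_j‖² > 0`. -/
theorem error_functional_nonincreasing (p T r : ℕ) (hp : 0 < p) (hT : 0 < T)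
    (τ : Fin p → ℝ) (hτ : ∀ j, 0 ≤ τ j) (b : Fin p → Fin r → ℝ)
    (z : ℝ) (hz : IsGreatest (Set.range fun j => τ j * ∑ k, (b j k) ^ 2) z)
    (hzpos : 0 < z)
    (h : ℝ → ℝ)
    (hh : ∀ α : ℝ, h α =
      (p : ℝ)⁻¹ * ∑ j, α ^ 2 * (τ j) ^ 2 * (∑ k, (b j k) ^ 2) / (1 + α * τ j) ^ 2
        + ((p : ℝ) * T)⁻¹ * ∑ j, 1 / (1 + α * τ j) ^ 2) :
    ∀ α₁ α₂ : ℝ, 0 ≤ α₁ → α₁ ≤ α₂ → α₂ ≤ ((T : ℝ) * z)⁻¹ → h α₂ ≤ h α₁ :=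
  error_functional_nonincreasing_general p T r τ hτ b z hz hzpos h hh
end

section
/- Let p, T be positive integers, let τ₁,…,τ_p ≥ 0 and b̃₁,…,b̃_p ∈ ℝ^r, and define h(α) = p⁻¹ Σ_{j=1}^p α²τ_j²‖b̃_j‖²/(1+ατ_j)² + (pT)⁻¹ Σ_{j=1}^p 1/(1+ατ_j)². Suppose there exists z > 0 such that τ_j‖b̃_j‖² = z for every j with τ_j ≠ 0, and that τ_j ≠ 0 for at least one j. Then α* = 1/(Tz) is a global minimum point of h on [0, ∞): for every α ≥ 0, h(α) ≥ h(α*). -/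
open BigOperators

/- Pulling `1/T` into each summand, `h` is `p⁻¹ Σⱼ (α²τⱼ²‖b̃ⱼ‖² + T⁻¹)/(1 + ατⱼ)²`, and the hypothesis
turns every numerator into `α²τⱼz + T⁻¹`. Each summand is then minimised separately at the common
point `α = T⁻¹/z`: for `f(α) = (α²tz + c)/(1 + αt)²` one has
`(α²tz + c)(z + ct) - cz(1 + αt)² = t(αz - c)² ≥ 0`, i.e. `f(α) ≥ cz/(z + ct) = f(c/z)`. -/

/-- The `j`-th summand of `p · h(α)`, with `c = T⁻¹`, `t = τⱼ`, `B = ‖b̃ⱼ‖²`. -/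
noncomputable def errorSummand (c t B α : ℝ) : ℝ :=
  α ^ 2 * t ^ 2 * B / (1 + α * t) ^ 2 + c * (1 / (1 + α * t) ^ 2)

lemma sq_mul_add_div_sq_at_opt (c z t : ℝ) (hc : 0 ≤ c) (hz : 0 < z) (ht : 0 ≤ t) :
    ((c / z) ^ 2 * t * z + c) / (1 + c / z * t) ^ 2 = c * z / (z + c * t) := by
  have hzct : 0 < z + c * t := by positivity
  field_simp
  ring

lemma sq_mul_add_div_sq_opt_le (c z t α : ℝ) (hc : 0 ≤ c) (hz : 0 < z) (ht : 0 ≤ t)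
    (hα : 1 + α * t ≠ 0) :
    ((c / z) ^ 2 * t * z + c) / (1 + c / z * t) ^ 2 ≤ (α ^ 2 * t * z + c) / (1 + α * t) ^ 2 := by
  rw [sq_mul_add_div_sq_at_opt c z t hc hz ht,
    div_le_div_iff₀ (by positivity) (sq_pos_of_ne_zero hα)]
  have h_gap : (α ^ 2 * t * z + c) * (z + c * t) - c * z * (1 + α * t) ^ 2 = t * (α * z - c) ^ 2 := by
    ring
  linarith [mul_nonneg ht (sq_nonneg (α * z - c))]

lemma errorSummand_eq (c t B z α : ℝ) (hB : t ≠ 0 → t * B = z) :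
    errorSummand c t B α = (α ^ 2 * t * z + c) / (1 + α * t) ^ 2 := by
  have htB : t ^ 2 * B = t * z := by
    rcases eq_or_ne t 0 with rfl | ht
    · simp
    · rw [sq, mul_assoc, hB ht]
  rw [errorSummand, mul_assoc (α ^ 2), htB, mul_one_div, ← add_div, ← mul_assoc]

lemma errorSummand_opt_le (c t B z α : ℝ) (hc : 0 ≤ c) (hz : 0 < z) (ht : 0 ≤ t)
    (hB : t ≠ 0 → t * B = z) (hα : 0 ≤ α) :
    errorSummand c t B (c / z) ≤ errorSummand c t B α := by
  rw [errorSummand_eq c t B z _ hB, errorSummand_eq c t B z _ hB]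
  exact sq_mul_add_div_sq_opt_le c z t α hc hz ht (by positivity)

theorem error_functional_global_min_general (p T r : ℕ)
    (τ : Fin p → ℝ) (hτ : ∀ j, 0 ≤ τ j) (b : Fin p → Fin r → ℝ)
    (z : ℝ) (hzpos : 0 < z)
    (hz : ∀ j, τ j ≠ 0 → τ j * (∑ k, (b j k) ^ 2) = z)
    (h : ℝ → ℝ)
    (hh : ∀ α : ℝ, h α =
      (p : ℝ)⁻¹ * ∑ j, α ^ 2 * (τ j) ^ 2 * (∑ k, (b j k) ^ 2) / (1 + α * τ j) ^ 2
        + ((p : ℝ) * T)⁻¹ * ∑ j, 1 / (1 + α * τ j) ^ 2) :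
    ∀ α : ℝ, 0 ≤ α → h α ≥ h (1 / ((T : ℝ) * z)) := by
  intro α hα
  have h_eq_sum : ∀ β, h β = (p : ℝ)⁻¹ *
      ∑ j, errorSummand (T : ℝ)⁻¹ (τ j) (∑ k, (b j k) ^ 2) β := by
    intro β
    simp only [hh β, errorSummand, Finset.sum_add_distrib, ← Finset.mul_sum, mul_inv]
    ring
  have h_opt : 1 / ((T : ℝ) * z) = (T : ℝ)⁻¹ / z := by
    rw [one_div, mul_inv, div_eq_mul_inv]
  rw [ge_iff_le, h_eq_sum, h_eq_sum, h_opt]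
  gcongr with j
  exact errorSummand_opt_le _ _ _ z α (by positivity) hzpos (hτ j) (hz j) hα

/-- If `τ_j‖b̃_j‖² = z > 0` for every `j` with `τ_j ≠ 0` (and some `τ_j ≠ 0`), then
`α* = 1/(Tz)` is a global minimum point of the asymptotic error functional
`h(α) = p⁻¹ Σ_j α²τ_j²‖b̃_j‖²/(1+ατ_j)² + (pT)⁻¹ Σ_j 1/(1+ατ_j)²` on `[0, ∞)`. -/
theorem error_functional_global_min (p T r : ℕ) (hp : 0 < p) (hT : 0 < T)
    (τ : Fin p → ℝ) (hτ : ∀ j, 0 ≤ τ j) (b : Fin p → Fin r → ℝ)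
    (z : ℝ) (hzpos : 0 < z)
    (hz : ∀ j, τ j ≠ 0 → τ j * (∑ k, (b j k) ^ 2) = z)
    (hex : ∃ j, τ j ≠ 0)
    (h : ℝ → ℝ)
    (hh : ∀ α : ℝ, h α =
      (p : ℝ)⁻¹ * ∑ j, α ^ 2 * (τ j) ^ 2 * (∑ k, (b j k) ^ 2) / (1 + α * τ j) ^ 2
        + ((p : ℝ) * T)⁻¹ * ∑ j, 1 / (1 + α * τ j) ^ 2) :
    ∀ α : ℝ, 0 ≤ α → h α ≥ h (1 / ((T : ℝ) * z)) :=
  error_functional_global_min_general p T r τ hτ b z hzpos hz h hh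
end

section
/- Let p, T, r be positive integers, let U be a p×p real orthogonal matrix, let Λ = diag(τ₁,…,τ_p) with τ_j ≥ 0, let L = UΛUᵀ, let α ≥ 0, and set D₁ = I_p + αL. Let B be a p×r real matrix and write b̃_j for the j-th row of UᵀB. Then tr(Bᵀ(I_p − D₁⁻¹)B) = Σ_{j=1}^p α·τ_j·‖b̃_j‖²/(1+ατ_j). Moreover, if max_j τ_j‖b̃_j‖² > 0 and α = (T·max_j{τ_j‖b̃_j‖²})⁻¹, then p⁻¹·tr(Bᵀ(I_p − D₁⁻¹)B) ≤ 1/T. -/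
open Matrix BigOperators

/-!
In the eigenbasis of `L` the shrinkage matrix is diagonal, so
`I - D₁⁻¹ = U diag(ατ_j / (1 + ατ_j)) Uᵀ` and the trace is the weighted sum of the squared
row norms of `UᵀB`. Each summand is at most `ατ_j‖b̃_j‖² ≤ α z = 1/T`, hence so is their average.
-/

section

variable {n m K : Type*} [Fintype n] [Fintype m] [DecidableEq n]

theorem trace_transpose_mul_diagonal_mul_self [CommRing K] (C : Matrix n m K) (d : n → K) :
    trace (Cᵀ * diagonal d * C) = ∑ j, d j * ∑ k, C j k ^ 2 := by
  simp only [trace, diag_apply, mul_apply (M := Cᵀ * diagonal d), mul_diagonal, transpose_apply,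
    Finset.mul_sum]
  rw [Finset.sum_comm]
  refine Fintype.sum_congr _ _ fun j => Fintype.sum_congr _ _ fun k => ?_
  ring

theorem trace_transpose_mul_conj_diagonal_mul [CommRing K] (B : Matrix n m K)
    (U : Matrix n n K) (d : n → K) :
    trace (Bᵀ * (U * diagonal d * Uᵀ) * B) = ∑ j, d j * ∑ k, (Uᵀ * B) j k ^ 2 := by
  rw [← trace_transpose_mul_diagonal_mul_self, transpose_mul, transpose_transpose]
  simp only [Matrix.mul_assoc]

variable [Field K] {U : Matrix n n K}

theorem inv_conj_diagonal (hU : U * Uᵀ = 1) {d : n → K} (hd : ∀ j, d j ≠ 0) :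
    (U * diagonal d * Uᵀ)⁻¹ = U * diagonal d⁻¹ * Uᵀ := by
  have hdiag : diagonal d * diagonal d⁻¹ = 1 := by
    rw [diagonal_mul_diagonal, ← diagonal_one]
    exact congrArg diagonal (funext fun j => mul_inv_cancel₀ (hd j))
  rw [Matrix.mul_inv_rev, Matrix.mul_inv_rev, inv_eq_left_inv hU, inv_eq_right_inv hU,
    inv_eq_right_inv hdiag, Matrix.mul_assoc]

theorem one_add_smul_conj_diagonal (hU : U * Uᵀ = 1) (α : K) (τ : n → K) :
    1 + α • (U * diagonal τ * Uᵀ) = U * diagonal (fun j => 1 + α * τ j) * Uᵀ := by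
  have : diagonal (fun j => 1 + α * τ j) = 1 + α • diagonal τ := by
    rw [← diagonal_one, ← diagonal_smul, diagonal_add]; rfl
  rw [this, Matrix.mul_add, Matrix.add_mul, Matrix.mul_one, hU, Matrix.mul_smul, Matrix.smul_mul]

theorem one_sub_inv_one_add_smul_conj_diagonal (hU : U * Uᵀ = 1) {α : K} {τ : n → K}
    (h : ∀ j, 1 + α * τ j ≠ 0) :
    1 - (1 + α • (U * diagonal τ * Uᵀ))⁻¹
      = U * diagonal (fun j => α * τ j / (1 + α * τ j)) * Uᵀ := by
  rw [one_add_smul_conj_diagonal hU, inv_conj_diagonal hU h]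
  nth_rw 1 [← hU, ← Matrix.mul_one U, ← diagonal_one]
  rw [← Matrix.sub_mul, ← Matrix.mul_sub, diagonal_sub]
  congr 3
  funext j
  simp only [Pi.inv_apply]
  field_simp [h j]
  ring

end

theorem inv_card_mul_sum_le {ι : Type*} [Fintype ι] {f : ι → ℝ} {c : ℝ} (hc : 0 ≤ c)
    (hf : ∀ i, f i ≤ c) : (Fintype.card ι : ℝ)⁻¹ * ∑ i, f i ≤ c := by
  rcases isEmpty_or_nonempty ι with hι | hι
  · simpa using hc
  calc (Fintype.card ι : ℝ)⁻¹ * ∑ i, f i ≤ (Fintype.card ι : ℝ)⁻¹ * (Fintype.card ι * c) := by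
        gcongr
        simpa using Finset.sum_le_card_nsmul Finset.univ f c fun i _ => hf i
    _ = c := by field_simp

theorem mul_div_one_add_mul_le {α τ s z : ℝ} (hα : 0 ≤ α) (hτ : 0 ≤ τ) (hs : 0 ≤ s)
    (hz : τ * s ≤ z) : α * τ * s / (1 + α * τ) ≤ α * z :=
  calc α * τ * s / (1 + α * τ) ≤ α * (τ * s) := by
        rw [← mul_assoc]
        exact div_le_self (by positivity) (by nlinarith [mul_nonneg hα hτ])
    _ ≤ α * z := mul_le_mul_of_nonneg_left hz hα

theorem laplacian_shrinkage_bias_general (p T r : ℕ)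
    (U : Matrix (Fin p) (Fin p) ℝ) (hU' : U * Uᵀ = 1)
    (τ : Fin p → ℝ) (hτ : ∀ j, 0 ≤ τ j)
    (α : ℝ) (hα : 0 ≤ α) (B : Matrix (Fin p) (Fin r) ℝ) :
    Matrix.trace (Bᵀ * ((1 : Matrix (Fin p) (Fin p) ℝ)
          - ((1 : Matrix (Fin p) (Fin p) ℝ) + α • (U * Matrix.diagonal τ * Uᵀ))⁻¹) * B)
        = ∑ j, α * τ j * (∑ k, ((Uᵀ * B) j k) ^ 2) / (1 + α * τ j) ∧
    ∀ z : ℝ, 0 < z →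
      IsGreatest (Set.range fun j => τ j * ∑ k, ((Uᵀ * B) j k) ^ 2) z →
      α = ((T : ℝ) * z)⁻¹ →
      (p : ℝ)⁻¹ * Matrix.trace (Bᵀ * ((1 : Matrix (Fin p) (Fin p) ℝ)
          - ((1 : Matrix (Fin p) (Fin p) ℝ) + α • (U * Matrix.diagonal τ * Uᵀ))⁻¹) * B)
        ≤ 1 / (T : ℝ) := by
  have htrace : Matrix.trace (Bᵀ * ((1 : Matrix (Fin p) (Fin p) ℝ)
          - ((1 : Matrix (Fin p) (Fin p) ℝ) + α • (U * Matrix.diagonal τ * Uᵀ))⁻¹) * B)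
        = ∑ j, α * τ j * (∑ k, ((Uᵀ * B) j k) ^ 2) / (1 + α * τ j) := by
    have hne : ∀ j, 1 + α * τ j ≠ 0 := fun j => by have := hτ j; positivity
    rw [one_sub_inv_one_add_smul_conj_diagonal hU' hne, trace_transpose_mul_conj_diagonal_mul]
    exact Fintype.sum_congr _ _ fun j => div_mul_eq_mul_div _ _ _
  refine ⟨htrace, fun z hz hmax hαz => ?_⟩
  have hαz' : α * z = 1 / T := by rw [hαz]; field_simp
  rw [htrace, ← hαz']
  simpa using inv_card_mul_sum_le (mul_nonneg hα hz.le) fun j =>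
    mul_div_one_add_mul_le hα (hτ j) (by positivity) (hmax.2 ⟨j, rfl⟩)

/-- For the Laplacian-penalty shrinkage matrix `D₁ = I_p + αL`, `L = U diag(τ) Uᵀ` with `U`
orthogonal, `τ_j ≥ 0`, `α ≥ 0`:
`tr(Bᵀ(I_p − D₁⁻¹)B) = Σ_j ατ_j‖b̃_j‖²/(1+ατ_j)` where `b̃_j` is the `j`-th row of `UᵀB`;
moreover, if `z = max_j τ_j‖b̃_j‖² > 0` and `α = (Tz)⁻¹`, then
`p⁻¹ tr(Bᵀ(I_p − D₁⁻¹)B) ≤ 1/T`. -/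
theorem laplacian_shrinkage_bias (p T r : ℕ) (hp : 0 < p) (hT : 0 < T) (hr : 0 < r)
    (U : Matrix (Fin p) (Fin p) ℝ) (hU : Uᵀ * U = 1) (hU' : U * Uᵀ = 1)
    (τ : Fin p → ℝ) (hτ : ∀ j, 0 ≤ τ j)
    (α : ℝ) (hα : 0 ≤ α) (B : Matrix (Fin p) (Fin r) ℝ) :
    Matrix.trace (Bᵀ * ((1 : Matrix (Fin p) (Fin p) ℝ)
          - ((1 : Matrix (Fin p) (Fin p) ℝ) + α • (U * Matrix.diagonal τ * Uᵀ))⁻¹) * B)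
        = ∑ j, α * τ j * (∑ k, ((Uᵀ * B) j k) ^ 2) / (1 + α * τ j) ∧
    ∀ z : ℝ, 0 < z →
      IsGreatest (Set.range fun j => τ j * ∑ k, ((Uᵀ * B) j k) ^ 2) z →
      α = ((T : ℝ) * z)⁻¹ →
      (p : ℝ)⁻¹ * Matrix.trace (Bᵀ * ((1 : Matrix (Fin p) (Fin p) ℝ)
          - ((1 : Matrix (Fin p) (Fin p) ℝ) + α • (U * Matrix.diagonal τ * Uᵀ))⁻¹) * B)
        ≤ 1 / (T : ℝ) :=
  laplacian_shrinkage_bias_general p T r U hU' τ hτ α hα B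
end

section
/- Let M > 0. Let 𝓔 = (ε_tj) be a T×p matrix of mutually independent real-valued random variables with E[ε_tj] = 0, E[ε_tj²] = 1, and E[ε_tj⁴] ≤ M for all t, j, and let F be a random T×r real matrix, independent of the family (ε_tj), satisfying E[‖vᵀF‖²] ≤ M‖v‖² for every v ∈ ℝ^T. Let Q be a symmetric p×p real matrix, let P be a deterministic T×T real matrix whose operator norm satisfies ‖P‖ ≤ M, and let u ∈ ℝ^T with ‖u‖ = 1. Then there is a constant C depending only on M (and not on p, T, r, u, P, Q, or the distributions) such that E[‖uᵀ𝓔Q𝓔ᵀPF − tr(Q)·uᵀPF‖²] ≤ C·T·‖Q‖_F². -/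
/-!
Write `w = uᵀ𝓔Q𝓔ᵀ − tr(Q)·uᵀ`, so that the quantity to bound is `E‖wPF‖²`. Each coordinate
`w_s` is a centred quadratic form `ξᵀC_sξ − tr C_s` in the vectorised noise `ξ = vec 𝓔`, with
`C_s = (u e_sᵀ) ⊗ Q` and `‖C_s‖_F = ‖u‖‖Q‖_F`. For independent standardised entries,
`E(ξᵀCξ − tr C)² = ‖C‖_F² + tr(C²) + Σᵢ C_ii²(E ξᵢ⁴ − 3) ≤ (M + 2)‖C‖_F²`, which follows from the
fourth-moment formula `E[ξᵢξⱼξₖξₗ] = δᵢⱼδₖₗ + δᵢₖδⱼₗ + δᵢₗδⱼₖ + [i=j=k=l](E ξᵢ⁴ − 3)`.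
Since `F` is independent of `𝓔`, conditioning on `𝓔` gives `E‖aF‖² = E[aᵀGa] ≤ M E‖a‖²` for
`a = wP` and `G = E[FFᵀ]`; and `‖wP‖ ≤ M‖w‖` because `Pᵀ` has the same operator norm as `P`.
Altogether `E‖wPF‖² ≤ M³ Σ_s E w_s² ≤ M³(M + 2)·T·‖Q‖_F²`.
-/

open MeasureTheory ProbabilityTheory Matrix BigOperators
open scoped Kronecker

lemma abs_mul_mul_mul_le (a b c d : ℝ) :
    |a * b * c * d| ≤ (a ^ 4 + b ^ 4 + c ^ 4 + d ^ 4) / 4 := by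
  rw [abs_mul, abs_mul, abs_mul]
  have hab : |a| * |b| ≤ (a ^ 2 + b ^ 2) / 2 := by
    nlinarith [sq_nonneg (|a| - |b|), sq_abs a, sq_abs b]
  have hcd : |c| * |d| ≤ (c ^ 2 + d ^ 2) / 2 := by
    nlinarith [sq_nonneg (|c| - |d|), sq_abs c, sq_abs d]
  calc |a| * |b| * |c| * |d| = (|a| * |b|) * (|c| * |d|) := by ring
    _ ≤ (a ^ 2 + b ^ 2) / 2 * ((c ^ 2 + d ^ 2) / 2) := by gcongr
    _ ≤ _ := by nlinarith [sq_nonneg (a ^ 2 + b ^ 2 - c ^ 2 - d ^ 2), sq_nonneg (a ^ 2 - b ^ 2),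
        sq_nonneg (c ^ 2 - d ^ 2)]

section Matrices
variable {m n : Type*} [Fintype m] [Fintype n]

lemma sum_sq_vecMul_eq (v : m → ℝ) (G : Matrix m n ℝ) :
    ∑ k, (v ᵥ* G) k ^ 2 = ∑ x, ∑ y, v x * v y * ∑ k, G x k * G y k := by
  have hk : ∀ k, (v ᵥ* G) k ^ 2 = ∑ x, ∑ y, v x * v y * (G x k * G y k) := fun k => by
    simp only [vecMul, dotProduct, sq, Finset.sum_mul_sum]
    exact Finset.sum_congr rfl fun x _ => Finset.sum_congr rfl fun y _ => by ring
  simp only [hk, Finset.mul_sum]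
  rw [Finset.sum_comm]
  exact Finset.sum_congr rfl fun x _ => Finset.sum_comm

lemma sum_vecMul_sq_le {c : ℝ} (hc : 0 ≤ c) (P : Matrix m n ℝ)
    (hP : ∀ v, ∑ i, (P *ᵥ v) i ^ 2 ≤ c * ∑ j, v j ^ 2) (w : m → ℝ) :
    ∑ j, (w ᵥ* P) j ^ 2 ≤ c * ∑ i, w i ^ 2 := by
  set S := ∑ j, (w ᵥ* P) j ^ 2
  have hS : S = ∑ i, w i * (P *ᵥ (w ᵥ* P)) i := by
    simpa only [S, sq, dotProduct] using (dotProduct_mulVec w P (w ᵥ* P)).symm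
  have hCS : S * S ≤ (c * ∑ i, w i ^ 2) * S := by
    calc S * S = S ^ 2 := (sq S).symm
      _ ≤ (∑ i, w i ^ 2) * ∑ i, (P *ᵥ (w ᵥ* P)) i ^ 2 :=
        hS ▸ Finset.sum_mul_sq_le_sq_mul_sq _ _ _
      _ ≤ (∑ i, w i ^ 2) * (c * S) := by gcongr; exact hP _
      _ = (c * ∑ i, w i ^ 2) * S := by ring
  rcases (show 0 ≤ S by positivity).eq_or_lt with hzero | hpos
  · rw [← hzero]
    positivity
  · exact le_of_mul_le_mul_right hCS hpos

lemma sum_sum_mul_transpose_le (C : Matrix m m ℝ) :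
    ∑ i, ∑ j, C i j * C j i ≤ ∑ i, ∑ j, C i j ^ 2 := by
  have hamgm : ∑ i, ∑ j, C i j * C j i ≤ ∑ i, ∑ j, (C i j ^ 2 + C j i ^ 2) / 2 :=
    Finset.sum_le_sum fun i _ => Finset.sum_le_sum fun j _ => by
      nlinarith [sq_nonneg (C i j - C j i)]
  simpa only [← Finset.sum_div, Finset.sum_add_distrib, add_self_div_two,
    Finset.sum_comm (γ := m) (f := fun i j => C j i ^ 2)] using hamgm

variable [DecidableEq m]

lemma vecMul_mul_transpose_sub_trace_smul_apply (u : m → ℝ) (E : m → n → ℝ)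
    (Q : Matrix n n ℝ) (s : m) :
    ((u ᵥ* of E) ᵥ* Q ᵥ* (of E)ᵀ - trace Q • u) s =
      (fun i : m × n => E i.1 i.2) ⬝ᵥ (vecMulVec u (Pi.single s 1) ⊗ₖ Q) *ᵥ
          (fun i : m × n => E i.1 i.2) - trace (vecMulVec u (Pi.single s 1) ⊗ₖ Q) := by
  rw [trace_kronecker]
  simp only [vecMul_vecMul, trace, diag_apply, Pi.sub_apply, vecMul, dotProduct, mul_apply,
    of_apply, transpose_apply, Finset.sum_mul, Finset.mul_sum, Pi.smul_apply, smul_eq_mul, mulVec,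
    vecMulVec, Pi.single_apply, mul_ite, mul_one, mul_zero, kroneckerMap_apply, ite_mul, zero_mul,
    Fintype.sum_prod_type, Finset.sum_ite_irrel, Finset.sum_const_zero, Finset.sum_ite_eq',
    Finset.mem_univ, if_true]
  congr 1
  · refine Finset.sum_congr rfl fun t _ => ?_
    rw [Finset.sum_comm]
    exact Finset.sum_congr rfl fun j _ => Finset.sum_congr rfl fun l _ => by ring
  · exact Finset.sum_congr rfl fun j _ => mul_comm _ _

lemma sum_sq_kronecker_vecMulVec_single (u : m → ℝ) (Q : Matrix n n ℝ) (s : m) :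
    ∑ i, ∑ j, (vecMulVec u (Pi.single s 1) ⊗ₖ Q) i j ^ 2 =
      (∑ t, u t ^ 2) * ∑ i, ∑ j, Q i j ^ 2 := by
  simp only [kroneckerMap_apply, vecMulVec_apply, Pi.single_apply, mul_ite, mul_one, mul_zero,
    ite_mul, zero_mul, ite_pow, mul_pow, ne_eq, OfNat.ofNat_ne_zero, not_false_eq_true, zero_pow,
    Fintype.sum_prod_type, Finset.sum_ite_irrel, Finset.sum_const_zero, Finset.sum_ite_eq',
    Finset.mem_univ, if_true]
  rw [Finset.sum_mul]
  simp only [Finset.mul_sum]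

end Matrices

section FourthMoments
variable {Ω ι : Type*} [MeasurableSpace Ω] {μ : Measure Ω}

lemma integrable_mul_mul_mul_of_integrable_pow_four {f g h k : Ω → ℝ}
    (hf : AEStronglyMeasurable f μ) (hg : AEStronglyMeasurable g μ)
    (hh : AEStronglyMeasurable h μ) (hk : AEStronglyMeasurable k μ)
    (hf4 : Integrable (fun ω => f ω ^ 4) μ) (hg4 : Integrable (fun ω => g ω ^ 4) μ)
    (hh4 : Integrable (fun ω => h ω ^ 4) μ) (hk4 : Integrable (fun ω => k ω ^ 4) μ) :
    Integrable (fun ω => f ω * g ω * h ω * k ω) μ :=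
  Integrable.mono' ((((hf4.add hg4).add hh4).add hk4).div_const 4)
    (((hf.mul hg).mul hh).mul hk) (ae_of_all _ fun _ => abs_mul_mul_mul_le _ _ _ _)

variable {X : ι → Ω → ℝ}

lemma memLp_two_mul_of_integrable_pow_four (hX : ∀ i, Measurable (X i))
    (hX4 : ∀ i, Integrable (fun ω => X i ω ^ 4) μ) (i j : ι) :
    MemLp (fun ω => X i ω * X j ω) 2 μ := by
  have hm : ∀ i, AEStronglyMeasurable (X i) μ := fun i => (hX i).aestronglyMeasurable
  refine (memLp_two_iff_integrable_sq ((hm i).mul (hm j))).2 ?_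
  refine (integrable_mul_mul_mul_of_integrable_pow_four (hm i) (hm j) (hm i) (hm j)
      (hX4 i) (hX4 j) (hX4 i) (hX4 j)).congr (ae_of_all _ fun ω => ?_)
  simp only [Pi.mul_apply]
  ring

lemma integral_mul_eq_ite [DecidableEq ι] (hX : ∀ i, Measurable (X i)) (hindep : iIndepFun X μ)
    (h0 : ∀ i, ∫ ω, X i ω ∂μ = 0) (h2 : ∀ i, ∫ ω, X i ω ^ 2 ∂μ = 1) (i j : ι) :
    ∫ ω, X i ω * X j ω ∂μ = if i = j then 1 else 0 := by
  split_ifs with hij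
  · subst hij
    simpa only [pow_two] using h2 i
  · rw [(hindep.indepFun hij).integral_fun_mul_eq_mul_integral (hX i).aestronglyMeasurable
      (hX j).aestronglyMeasurable, h0, zero_mul]

lemma integral_mul_mul_mul_eq_zero [DecidableEq ι] (hX : ∀ i, Measurable (X i))
    (hindep : iIndepFun X μ) (h0 : ∀ i, ∫ ω, X i ω ∂μ = 0) (i j k l : ι)
    (hij : i ≠ j) (hik : i ≠ k) (hil : i ≠ l) :
    ∫ ω, X i ω * X j ω * X k ω * X l ω ∂μ = 0 := by
  let S : Finset ι := {j, k, l}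
  have hdisj : Disjoint ({i} : Finset ι) S := by simp [S, hij, hik, hil]
  have hind : IndepFun (X i) (fun ω => X j ω * X k ω * X l ω) μ :=
    (hindep.indepFun_finset _ _ hdisj hX).comp
      (φ := fun v : ({i} : Finset ι) → ℝ => v ⟨i, by simp⟩)
      (ψ := fun v : S → ℝ => v ⟨j, by simp [S]⟩ * v ⟨k, by simp [S]⟩ * v ⟨l, by simp [S]⟩)
      (by fun_prop) (by fun_prop)
  simp only [mul_assoc] at hind ⊢
  rw [hind.integral_fun_mul_eq_mul_integral (hX i).aestronglyMeasurable (by fun_prop), h0,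
    zero_mul]

lemma integral_mul_self_mul_mul_self (hX : ∀ i, Measurable (X i)) (hindep : iIndepFun X μ)
    (h2 : ∀ i, ∫ ω, X i ω ^ 2 ∂μ = 1) {i j : ι} (hij : i ≠ j) :
    ∫ ω, X i ω * X i ω * X j ω * X j ω ∂μ = 1 := by
  have hind : IndepFun (fun ω => X i ω ^ 2) (fun ω => X j ω ^ 2) μ :=
    (hindep.indepFun hij).comp (φ := fun x => x ^ 2) (ψ := fun x => x ^ 2)
      (by fun_prop) (by fun_prop)
  rw [← h2 i, ← mul_one (∫ ω, X i ω ^ 2 ∂μ), ← h2 j,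
    ← hind.integral_fun_mul_eq_mul_integral (by fun_prop) (by fun_prop)]
  congr 1 with ω
  ring

lemma integral_mul_mul_mul_eq [DecidableEq ι] (hX : ∀ i, Measurable (X i))
    (hindep : iIndepFun X μ) (h0 : ∀ i, ∫ ω, X i ω ∂μ = 0) (h2 : ∀ i, ∫ ω, X i ω ^ 2 ∂μ = 1)
    (i j k l : ι) :
    ∫ ω, X i ω * X j ω * X k ω * X l ω ∂μ =
      (if i = j then 1 else 0) * (if k = l then 1 else 0)
        + (if i = k then 1 else 0) * (if j = l then 1 else 0)
        + (if i = l then 1 else 0) * (if j = k then 1 else 0)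
        + if i = j ∧ j = k ∧ k = l then ∫ ω, X i ω ^ 4 ∂μ - 3 else 0 := by
  have lonely := integral_mul_mul_mul_eq_zero hX hindep h0
  have pair {a b : ι} (hab : a ≠ b) := integral_mul_self_mul_mul_self hX hindep h2 hab
  -- An index occurring exactly once kills the moment; only pairings and `i = j = k = l` survive.
  by_cases hij : i = j
  · subst hij
    by_cases hkl : k = l
    · subst hkl
      by_cases hik : i = k
      · subst hik
        simp only [and_self, if_true]
        rw [show (fun ω => X i ω * X i ω * X i ω * X i ω) = fun ω => X i ω ^ 4 by ext; ring]
        ring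
      · simp [hik, pair hik]
    · by_cases hik : i = k
      · subst hik
        rw [(integral_congr_ae (ae_of_all _ fun ω => by ring)).trans
          (lonely l i i i (Ne.symm hkl) (Ne.symm hkl) (Ne.symm hkl))]
        simp [hkl]
      · rw [(integral_congr_ae (ae_of_all _ fun ω => by ring)).trans
          (lonely k i i l (Ne.symm hik) (Ne.symm hik) hkl)]
        simp [hik, hkl]
  · by_cases hik : i = k
    · subst hik
      by_cases hjl : j = l
      · subst hjl
        rw [(integral_congr_ae (ae_of_all _ fun ω => by ring)).trans (pair hij)]
        simp [hij]
      · rw [(integral_congr_ae (ae_of_all _ fun ω => by ring)).trans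
          (lonely j i i l (Ne.symm hij) (Ne.symm hij) hjl)]
        simp [hij, hjl, Ne.symm hij]
    · by_cases hil : i = l
      · subst hil
        by_cases hjk : j = k
        · subst hjk
          rw [(integral_congr_ae (ae_of_all _ fun ω => by ring)).trans (pair hij)]
          simp [hij, Ne.symm hij]
        · rw [(integral_congr_ae (ae_of_all _ fun ω => by ring)).trans
            (lonely j i k i (Ne.symm hij) hjk (Ne.symm hij))]
          simp [hij, hik, hjk]
      · rw [lonely i j k l hij hik hil]
        simp [hij, hik, hil]

lemma integral_mul_sub_ite_mul_mul_sub_ite [DecidableEq ι] (hX : ∀ i, Measurable (X i))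
    (hindep : iIndepFun X μ) (h0 : ∀ i, ∫ ω, X i ω ∂μ = 0) (h2 : ∀ i, ∫ ω, X i ω ^ 2 ∂μ = 1)
    (hX4 : ∀ i, Integrable (fun ω => X i ω ^ 4) μ) (i j k l : ι) :
    ∫ ω, (X i ω * X j ω - if i = j then 1 else 0) * (X k ω * X l ω - if k = l then 1 else 0) ∂μ =
      (if i = k then 1 else 0) * (if j = l then 1 else 0)
        + (if i = l then 1 else 0) * (if j = k then 1 else 0)
        + if i = j ∧ j = k ∧ k = l then ∫ ω, X i ω ^ 4 ∂μ - 3 else 0 := by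
  have := hindep.isProbabilityMeasure
  have hij := integral_mul_eq_ite hX hindep h0 h2 i j
  have hkl := integral_mul_eq_ite hX hindep h0 h2 k l
  rw [← hij, ← hkl]
  change cov[fun ω => X i ω * X j ω, fun ω => X k ω * X l ω; μ] = _
  rw [covariance_eq_sub (memLp_two_mul_of_integrable_pow_four hX hX4 i j) (memLp_two_mul_of_integrable_pow_four hX hX4 k l), hij, hkl]
  simp only [Pi.mul_apply, ← mul_assoc]
  rw [integral_mul_mul_mul_eq hX hindep h0 h2]
  ring

end FourthMoments

section QuadraticForm
variable {Ω ι : Type*} [MeasurableSpace Ω] {μ : Measure Ω} {X : ι → Ω → ℝ} [Fintype ι]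

lemma memLp_two_dotProduct_mulVec_sub [IsFiniteMeasure μ] (hX : ∀ i, Measurable (X i))
    (hX4 : ∀ i, Integrable (fun ω => X i ω ^ 4) μ) (C : Matrix ι ι ℝ) (c : ℝ) :
    MemLp (fun ω => (X · ω) ⬝ᵥ C *ᵥ (X · ω) - c) 2 μ := by
  have hsum : ∀ x : ι → ℝ, x ⬝ᵥ C *ᵥ x = ∑ i, ∑ j, C i j * (x i * x j) := fun x => by
    simp only [dotProduct, mulVec, Finset.mul_sum]
    exact Finset.sum_congr rfl fun i _ => Finset.sum_congr rfl fun j _ => by ring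
  simp only [hsum]
  exact (memLp_finsetSum _ fun i _ => memLp_finsetSum _ fun j _ =>
    (memLp_two_mul_of_integrable_pow_four hX hX4 i j).const_mul (C i j)).sub (memLp_const c)

variable [DecidableEq ι]

lemma dotProduct_mulVec_sub_trace (C : Matrix ι ι ℝ) (x : ι → ℝ) :
    x ⬝ᵥ C *ᵥ x - trace C =
      ∑ p : ι × ι, C p.1 p.2 * (x p.1 * x p.2 - if p.1 = p.2 then 1 else 0) := by
  simp only [dotProduct, mulVec, trace, diag, Finset.mul_sum, mul_sub, mul_ite, mul_one, mul_zero,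
    Finset.sum_sub_distrib, Fintype.sum_prod_type, Finset.sum_ite_eq, Finset.mem_univ, if_true]
  congr 1
  exact Finset.sum_congr rfl fun i _ => Finset.sum_congr rfl fun j _ => by ring

lemma integral_dotProduct_mulVec_sub_trace_sq (hX : ∀ i, Measurable (X i))
    (hindep : iIndepFun X μ) (h0 : ∀ i, ∫ ω, X i ω ∂μ = 0) (h2 : ∀ i, ∫ ω, X i ω ^ 2 ∂μ = 1)
    (hX4 : ∀ i, Integrable (fun ω => X i ω ^ 4) μ) (C : Matrix ι ι ℝ) :
    ∫ ω, ((X · ω) ⬝ᵥ C *ᵥ (X · ω) - trace C) ^ 2 ∂μ =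
      ∑ i, ∑ j, C i j ^ 2 + ∑ i, ∑ j, C i j * C j i
        + ∑ i, C i i ^ 2 * (∫ ω, X i ω ^ 4 ∂μ - 3) := by
  have := hindep.isProbabilityMeasure
  set Y : ι × ι → Ω → ℝ := fun p ω => X p.1 ω * X p.2 ω - if p.1 = p.2 then 1 else 0
  have hY : ∀ p q, Integrable (fun ω => C p.1 p.2 * C q.1 q.2 * (Y p ω * Y q ω)) μ := fun p q =>
    (((memLp_two_mul_of_integrable_pow_four hX hX4 p.1 p.2).sub (memLp_const _)).integrable_mul
      ((memLp_two_mul_of_integrable_pow_four hX hX4 q.1 q.2).sub (memLp_const _))).const_mul _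
  calc _ = ∫ ω, ∑ p, ∑ q, C p.1 p.2 * C q.1 q.2 * (Y p ω * Y q ω) ∂μ := by
        refine integral_congr_ae (ae_of_all _ fun ω => ?_)
        simp only [dotProduct_mulVec_sub_trace, sq, Finset.sum_mul_sum]
        exact Finset.sum_congr rfl fun p _ => Finset.sum_congr rfl fun q _ => by ring
    _ = ∑ p : ι × ι, ∑ q : ι × ι, C p.1 p.2 * C q.1 q.2 *
          ((if p.1 = q.1 then 1 else 0) * (if p.2 = q.2 then 1 else 0)
            + (if p.1 = q.2 then 1 else 0) * (if p.2 = q.1 then 1 else 0)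
            + if p.1 = p.2 ∧ p.2 = q.1 ∧ q.1 = q.2 then ∫ ω, X p.1 ω ^ 4 ∂μ - 3 else 0) := by
        rw [integral_finsetSum _ fun p _ => integrable_finsetSum _ fun q _ => hY p q]
        refine Finset.sum_congr rfl fun p _ => ?_
        rw [integral_finsetSum _ fun q _ => hY p q]
        refine Finset.sum_congr rfl fun q _ => ?_
        rw [integral_const_mul, integral_mul_sub_ite_mul_mul_sub_ite hX hindep h0 h2 hX4]
    _ = _ := by
        simp only [Fintype.sum_prod_type, mul_add, Finset.sum_add_distrib, mul_ite, mul_one,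
          mul_zero, ite_and, Finset.sum_ite_eq, Finset.mem_univ, if_true, Finset.sum_ite_irrel,
          Finset.sum_const_zero, sq]

lemma integral_dotProduct_mulVec_sub_trace_sq_le {M : ℝ} (hM : 0 ≤ M)
    (hX : ∀ i, Measurable (X i)) (hindep : iIndepFun X μ) (h0 : ∀ i, ∫ ω, X i ω ∂μ = 0)
    (h2 : ∀ i, ∫ ω, X i ω ^ 2 ∂μ = 1) (hX4 : ∀ i, Integrable (fun ω => X i ω ^ 4) μ)
    (hX4M : ∀ i, ∫ ω, X i ω ^ 4 ∂μ ≤ M) (C : Matrix ι ι ℝ) :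
    ∫ ω, ((X · ω) ⬝ᵥ C *ᵥ (X · ω) - trace C) ^ 2 ∂μ ≤ (M + 2) * ∑ i, ∑ j, C i j ^ 2 := by
  rw [integral_dotProduct_mulVec_sub_trace_sq hX hindep h0 h2 hX4]
  have hdiag : ∑ i, C i i ^ 2 * (∫ ω, X i ω ^ 4 ∂μ - 3) ≤ M * ∑ i, ∑ j, C i j ^ 2 := by
    rw [Finset.mul_sum]
    refine Finset.sum_le_sum fun i _ => ?_
    calc C i i ^ 2 * (∫ ω, X i ω ^ 4 ∂μ - 3) ≤ M * C i i ^ 2 := by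
          nlinarith [hX4M i, sq_nonneg (C i i)]
      _ ≤ M * ∑ j, C i j ^ 2 := mul_le_mul_of_nonneg_left
          (Finset.single_le_sum (f := fun j => C i j ^ 2) (fun _ _ => sq_nonneg _)
            (Finset.mem_univ i)) hM
  linarith [sum_sum_mul_transpose_le C]

end QuadraticForm

section IndependentFactor
variable {Ω m n : Type*} [Fintype m] [MeasurableSpace Ω] {μ : Measure Ω}

lemma memLp_vecMul_apply {p : ENNReal} {w : Ω → m → ℝ} (hw : ∀ i, MemLp (fun ω => w ω i) p μ)
    (P : Matrix m n ℝ) (j : n) : MemLp (fun ω => (w ω ᵥ* P) j) p μ :=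
  memLp_finsetSum _ fun i _ => (hw i).mul_const (P i j)

lemma integral_sum_sum_mul_of_indepFun {A : Ω → m → ℝ} {B : Ω → m → m → ℝ}
    (hAB : IndepFun A B μ) (hA : ∀ x y, Integrable (fun ω => A ω x * A ω y) μ)
    (hB : ∀ x y, Integrable (fun ω => B ω x y) μ) :
    ∫ ω, ∑ x, ∑ y, A ω x * A ω y * B ω x y ∂μ =
      ∫ ω, ∑ x, ∑ y, A ω x * A ω y * ∫ ω', B ω' x y ∂μ ∂μ := by
  have hind : ∀ x y, IndepFun (fun ω => A ω x * A ω y) (fun ω => B ω x y) μ := fun x y =>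
    hAB.comp (φ := fun a : m → ℝ => a x * a y) (ψ := fun b : m → m → ℝ => b x y)
      (by fun_prop) (by fun_prop)
  have hprod : ∀ x y, Integrable (fun ω => A ω x * A ω y * B ω x y) μ := fun x y =>
    (hind x y).integrable_mul (hA x y) (hB x y)
  rw [integral_finsetSum _ fun x _ => integrable_finsetSum _ fun y _ => hprod x y,
    integral_finsetSum _ fun x _ => integrable_finsetSum _ fun y _ => (hA x y).mul_const _]
  refine Finset.sum_congr rfl fun x _ => ?_
  rw [integral_finsetSum _ fun y _ => hprod x y,
    integral_finsetSum _ fun y _ => (hA x y).mul_const _]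
  refine Finset.sum_congr rfl fun y _ => ?_
  rw [integral_mul_const, (hind x y).integral_fun_mul_eq_mul_integral (hA x y).1 (hB x y).1]

variable [Fintype n]

lemma integral_sum_vecMul_sq_le {c : ℝ} (hc : 0 ≤ c) (P : Matrix m n ℝ)
    (hP : ∀ v, ∑ i, (P *ᵥ v) i ^ 2 ≤ c * ∑ j, v j ^ 2) {w : Ω → m → ℝ}
    (hw : ∀ i, MemLp (fun ω => w ω i) 2 μ) :
    ∫ ω, ∑ j, (w ω ᵥ* P) j ^ 2 ∂μ ≤ c * ∫ ω, ∑ i, w ω i ^ 2 ∂μ := by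
  rw [← integral_const_mul]
  exact integral_mono (integrable_finsetSum _ fun j _ => (memLp_vecMul_apply hw P j).integrable_sq)
    ((integrable_finsetSum _ fun i _ => (hw i).integrable_sq).const_mul c)
    fun ω => sum_vecMul_sq_le hc P hP (w ω)

variable [DecidableEq m] {F : Ω → m → n → ℝ}

lemma integrable_sum_mul_of_integrable_sum_vecMul_sq
    (hF : ∀ v : m → ℝ, Integrable (fun ω => ∑ k, ((v ᵥ* of (F ω)) k) ^ 2) μ) (x y : m) :
    Integrable (fun ω => ∑ k, F ω x k * F ω y k) μ := by
  have hpolar : ∀ ω, ∑ k, F ω x k * F ω y k =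
      (∑ k, ((Pi.single x 1 + Pi.single y 1) ᵥ* of (F ω)) k ^ 2
        - ∑ k, (Pi.single x 1 ᵥ* of (F ω)) k ^ 2 - ∑ k, (Pi.single y 1 ᵥ* of (F ω)) k ^ 2) / 2 := by
    intro ω
    simp only [add_vecMul, single_one_vecMul, Pi.add_apply, row_apply, of_apply,
      ← Finset.sum_sub_distrib, Finset.sum_div]
    exact Finset.sum_congr rfl fun k _ => by ring
  simp only [hpolar]
  exact (((hF _).sub (hF _)).sub (hF _)).div_const 2

lemma integral_sum_vecMul_sq_le_of_indepFun {M : ℝ} {a : Ω → m → ℝ} (haF : IndepFun a F μ)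
    (ha : ∀ x, MemLp (fun ω => a ω x) 2 μ)
    (hF : ∀ v : m → ℝ, Integrable (fun ω => ∑ k, ((v ᵥ* of (F ω)) k) ^ 2) μ)
    (hFM : ∀ v : m → ℝ, ∫ ω, ∑ k, ((v ᵥ* of (F ω)) k) ^ 2 ∂μ ≤ M * ∑ x, v x ^ 2) :
    ∫ ω, ∑ k, ((a ω ᵥ* of (F ω)) k) ^ 2 ∂μ ≤ M * ∫ ω, ∑ x, a ω x ^ 2 ∂μ := by
  have hH := integrable_sum_mul_of_integrable_sum_vecMul_sq hF
  have haa : ∀ x y, Integrable (fun ω => a ω x * a ω y) μ := fun x y =>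
    (ha x).integrable_mul (ha y)
  have hgram : ∀ v : m → ℝ, ∑ x, ∑ y, v x * v y * ∫ ω, ∑ k, F ω x k * F ω y k ∂μ
      = ∫ ω, ∑ k, ((v ᵥ* of (F ω)) k) ^ 2 ∂μ := fun v => by
    simp only [sum_sq_vecMul_eq, of_apply]
    rw [integral_finsetSum _ fun x _ => integrable_finsetSum _ fun y _ => (hH x y).const_mul _]
    refine Finset.sum_congr rfl fun x _ => ?_
    rw [integral_finsetSum _ fun y _ => (hH x y).const_mul _]
    exact Finset.sum_congr rfl fun y _ => (integral_const_mul _ _).symm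
  calc ∫ ω, ∑ k, ((a ω ᵥ* of (F ω)) k) ^ 2 ∂μ
      = ∫ ω, ∑ x, ∑ y, a ω x * a ω y * ∑ k, F ω x k * F ω y k ∂μ := by
        simp only [sum_sq_vecMul_eq, of_apply]
    _ = ∫ ω, ∑ x, ∑ y, a ω x * a ω y * ∫ ω', ∑ k, F ω' x k * F ω' y k ∂μ ∂μ :=
        integral_sum_sum_mul_of_indepFun
          (haF.comp (ψ := fun f : m → n → ℝ => fun x y => ∑ k, f x k * f y k) measurable_id
            (by fun_prop)) haa hH
    _ ≤ ∫ ω, M * ∑ x, a ω x ^ 2 ∂μ := by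
        refine integral_mono (integrable_finsetSum _ fun x _ => integrable_finsetSum _ fun y _ =>
          (haa x y).mul_const _)
          ((integrable_finsetSum _ fun x _ => (ha x).integrable_sq).const_mul _) fun ω => ?_
        simp only [hgram]
        exact hFM _
    _ = M * ∫ ω, ∑ x, a ω x ^ 2 ∂μ := integral_const_mul _ _

end IndependentFactor

section RandomMatrix
variable {Ω m n : Type*} [MeasurableSpace Ω] {μ : Measure Ω} [Fintype m] [Fintype n]
  [DecidableEq m] {X : m × n → Ω → ℝ}

lemma memLp_two_vecMul_mul_transpose_sub_trace_smul [IsFiniteMeasure μ]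
    (hX : ∀ i, Measurable (X i)) (hX4 : ∀ i, Integrable (fun ω => X i ω ^ 4) μ)
    (u : m → ℝ) (Q : Matrix n n ℝ) (s : m) :
    MemLp (fun ω => ((u ᵥ* of (fun t j => X (t, j) ω)) ᵥ* Q ᵥ* (of fun t j => X (t, j) ω)ᵀ
      - trace Q • u) s) 2 μ := by
  simp only [vecMul_mul_transpose_sub_trace_smul_apply]
  exact memLp_two_dotProduct_mulVec_sub hX hX4 _ _

lemma integral_vecMul_mul_transpose_sub_trace_smul_sq_le [DecidableEq n] {M : ℝ} (hM : 0 ≤ M)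
    (hX : ∀ i, Measurable (X i)) (hindep : iIndepFun X μ) (h0 : ∀ i, ∫ ω, X i ω ∂μ = 0)
    (h2 : ∀ i, ∫ ω, X i ω ^ 2 ∂μ = 1) (hX4 : ∀ i, Integrable (fun ω => X i ω ^ 4) μ)
    (hX4M : ∀ i, ∫ ω, X i ω ^ 4 ∂μ ≤ M) (u : m → ℝ) (Q : Matrix n n ℝ) (s : m) :
    ∫ ω, ((u ᵥ* of (fun t j => X (t, j) ω)) ᵥ* Q ᵥ* (of fun t j => X (t, j) ω)ᵀ
      - trace Q • u) s ^ 2 ∂μ ≤ (M + 2) * ((∑ t, u t ^ 2) * ∑ i, ∑ j, Q i j ^ 2) := by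
  simp only [vecMul_mul_transpose_sub_trace_smul_apply]
  rw [← sum_sq_kronecker_vecMulVec_single u Q s]
  exact integral_dotProduct_mulVec_sub_trace_sq_le hM hX hindep h0 h2 hX4 hX4M _

end RandomMatrix

/-- Let `M > 0`. There is a constant `C` depending only on `M` such that: for every `T×p`
random matrix `𝓔` with mutually independent mean-0, variance-1 entries with fourth moments
bounded by `M`, every random `T×r` matrix `F` independent of `𝓔` with `E[‖vᵀF‖²] ≤ M‖v‖²`
for all `v`, every symmetric `p×p` matrix `Q`, every deterministic `T×T` matrix `P` with
operator norm at most `M`, and every unit vector `u ∈ ℝ^T`,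
`E[‖uᵀ𝓔Q𝓔ᵀPF − tr(Q)·uᵀPF‖²] ≤ C·T·‖Q‖_F²`. -/
theorem uniform_quadratic_form_bound (M : ℝ) (hM : 0 < M) :
    ∃ C : ℝ, ∀ (T p r : ℕ), 0 < T → 0 < p → 0 < r →
      ∀ (Ω : Type) [MeasurableSpace Ω] (μ : Measure Ω), IsProbabilityMeasure μ →
      ∀ (𝓔 : Ω → Fin T → Fin p → ℝ), Measurable 𝓔 →
      iIndepFun
        (fun tj : Fin T × Fin p => fun ω => 𝓔 ω tj.1 tj.2) μ →
      (∀ t j, ∫ ω, 𝓔 ω t j ∂μ = 0) →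
      (∀ t j, ∫ ω, (𝓔 ω t j) ^ 2 ∂μ = 1) →
      (∀ t j, Integrable (fun ω => (𝓔 ω t j) ^ 4) μ) →
      (∀ t j, ∫ ω, (𝓔 ω t j) ^ 4 ∂μ ≤ M) →
      ∀ (F : Ω → Fin T → Fin r → ℝ), Measurable F →
      IndepFun 𝓔 F μ →
      (∀ v : Fin T → ℝ, Integrable (fun ω => ∑ k, ((v ᵥ* Matrix.of (F ω)) k) ^ 2) μ) →
      (∀ v : Fin T → ℝ,
        ∫ ω, ∑ k, ((v ᵥ* Matrix.of (F ω)) k) ^ 2 ∂μ ≤ M * ∑ s, (v s) ^ 2) →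
      ∀ (Q : Matrix (Fin p) (Fin p) ℝ), Qᵀ = Q →
      ∀ (P : Matrix (Fin T) (Fin T) ℝ),
      (∀ v : Fin T → ℝ, ∑ s, ((P *ᵥ v) s) ^ 2 ≤ M ^ 2 * ∑ s, (v s) ^ 2) →
      ∀ (u : Fin T → ℝ), (∑ s, (u s) ^ 2) = 1 →
      ∫ ω, ∑ k,
          (((((u ᵥ* Matrix.of (𝓔 ω)) ᵥ* Q) ᵥ* (Matrix.of (𝓔 ω))ᵀ ᵥ* P ᵥ* Matrix.of (F ω)) k
            - Matrix.trace Q * (((u ᵥ* P) ᵥ* Matrix.of (F ω)) k)) ^ 2) ∂μ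
        ≤ C * T * ∑ i, ∑ j, (Q i j) ^ 2 := by
  refine ⟨M ^ 3 * (M + 2), ?_⟩
  intro T p r _ _ _ Ω _ μ _ 𝓔 h𝓔 hindep h0 h2 h4 h4M F _ hEF hF hFM Q _ P hP u hu
  set X : Fin T × Fin p → Ω → ℝ := fun i ω => 𝓔 ω i.1 i.2
  have hX : ∀ i, Measurable (X i) := fun i => by fun_prop
  set w : (Fin T → Fin p → ℝ) → Fin T → ℝ := fun e => (u ᵥ* of e) ᵥ* Q ᵥ* (of e)ᵀ - trace Q • u
  have hwP : Measurable fun e => w e ᵥ* P := Continuous.measurable (by fun_prop)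
  have hwL2 : ∀ s, MemLp (fun ω => w (𝓔 ω) s) 2 μ :=
    memLp_two_vecMul_mul_transpose_sub_trace_smul hX (fun i => h4 i.1 i.2) u Q
  have hw2 : ∀ s, ∫ ω, w (𝓔 ω) s ^ 2 ∂μ ≤ (M + 2) * ∑ i, ∑ j, Q i j ^ 2 := fun s =>
    (integral_vecMul_mul_transpose_sub_trace_smul_sq_le hM.le hX hindep (fun i => h0 i.1 i.2)
      (fun i => h2 i.1 i.2) (fun i => h4 i.1 i.2) (fun i => h4M i.1 i.2) u Q s).trans_eq
      (by rw [hu, one_mul])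
  calc _ = ∫ ω, ∑ k, ((w (𝓔 ω) ᵥ* P ᵥ* of (F ω)) k) ^ 2 ∂μ := by
        simp only [w, sub_vecMul, smul_vecMul, vecMul_vecMul, Pi.sub_apply, Pi.smul_apply,
          smul_eq_mul]
    _ ≤ M * ∫ ω, ∑ x, (w (𝓔 ω) ᵥ* P) x ^ 2 ∂μ :=
        integral_sum_vecMul_sq_le_of_indepFun (hEF.comp hwP measurable_id)
          (memLp_vecMul_apply hwL2 P) hF hFM
    _ ≤ M * (M ^ 2 * ∫ ω, ∑ s, w (𝓔 ω) s ^ 2 ∂μ) :=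
        mul_le_mul_of_nonneg_left (integral_sum_vecMul_sq_le (sq_nonneg M) P hP hwL2) hM.le
    _ = M ^ 3 * ∑ s, ∫ ω, w (𝓔 ω) s ^ 2 ∂μ := by
        rw [integral_finsetSum _ fun s _ => (hwL2 s).integrable_sq]
        ring
    _ ≤ M ^ 3 * ∑ _ : Fin T, (M + 2) * ∑ i, ∑ j, Q i j ^ 2 := by gcongr with s; exact hw2 s
    _ = _ := by
        rw [Finset.sum_const, Finset.card_univ, Fintype.card_fin, nsmul_eq_mul]
        ring
end
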